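/- Fix l row indices 1 ≤ μ_1 < … < μ_l ≤ m. Then for every n, det [ det [x_{n+j−1+μ_i−1}^{(υ_{j'})}]_{i,j'=1,…,l} ]_{j=1,…,C(m,l); 1 ≤ υ_1 < … < υ_l ≤ m} = det [ det((Ψ_{n+j−2}⋯Ψ_{n+1}Ψ_n))^{(μ,ν)} ]_{j=1,…,C(m,l); 1 ≤ ν_1 < … < ν_l ≤ m} · (det x_n)^{C(m−1,l−1)}, where the empty product of matrices (j = 1) is the identity, x_n is the m×m Casoratian matrix [x_{n+i−1}^{(j)}]_{i,j=1,…,m}, and in each compound-type determinant the multi-indices ν (respectively υ) are arranged in the same fixed ordering at every occurrence. -/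

import Mathlib

open Matrix

/-- The product `Ψ_{n+j-1} ⋯ Ψ_{n+1} Ψ_n` of `j` consecutive companion matrices;
the empty product (`j = 0`) is the identity matrix. -/
noncomputable def prodPsi {m : ℕ} (Ψ : ℕ → Matrix (Fin m) (Fin m) ℂ) (n : ℕ) :
    ℕ → Matrix (Fin m) (Fin m) ℂ
  | 0 => 1
  | j + 1 => Ψ (n + j) * prodPsi Ψ n j


namespace CasAux
variable {R : Type*} [CommRing R] {l m : ℕ}



noncomputable def sEmb (s : {s : Finset (Fin m) // s.card = l}) : Fin l → Fin m :=
  s.1.orderEmbOfFin s.2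

lemma sEmb_injective (s : {s : Finset (Fin m) // s.card = l}) : Function.Injective (sEmb s) :=
  (s.1.orderEmbOfFin s.2).injective

lemma sEmb_mem (s : {s : Finset (Fin m) // s.card = l}) (i : Fin l) : sEmb s i ∈ s.1 :=
  Finset.orderEmbOfFin_mem _ _ _

lemma sEmb_range (s : {s : Finset (Fin m) // s.card = l}) :
    Set.range (sEmb s) = ↑s.1 := Finset.range_orderEmbOfFin _ _

noncomputable def pairEquiv :
    ({s : Finset (Fin m) // s.card = l} × Equiv.Perm (Fin l)) ≃
      {f : Fin l → Fin m // Function.Injective f} := by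
  apply Equiv.ofBijective (fun p => ⟨sEmb p.1 ∘ p.2, (sEmb_injective p.1).comp p.2.injective⟩)
  constructor
  · rintro ⟨s, σ⟩ ⟨t, τ⟩ h
    have h' : sEmb s ∘ σ = sEmb t ∘ τ := congrArg Subtype.val h
    have hst : s = t := by
      apply Subtype.ext
      have : Set.range (sEmb s ∘ σ) = Set.range (sEmb t ∘ τ) := by rw [h']
      rw [Set.range_comp, Set.range_comp, σ.range_eq_univ, τ.range_eq_univ,
        Set.image_univ, Set.image_univ, sEmb_range, sEmb_range] at this
      exact_mod_cast Finset.coe_injective this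
    subst hst
    have : (σ : Fin l → Fin l) = τ := by
      funext i
      exact sEmb_injective s (congrFun h' i)
    exact Prod.ext rfl (Equiv.coe_fn_injective this)
  · rintro ⟨f, hf⟩
    set s : Finset (Fin m) := Finset.univ.image f with hs
    have hcard : s.card = l := by
      rw [hs, Finset.card_image_of_injective _ hf, Finset.card_univ, Fintype.card_fin]
    set S : {s : Finset (Fin m) // s.card = l} := ⟨s, hcard⟩ with hS
    have hmem : ∀ i, f i ∈ s := fun i => Finset.mem_image_of_mem f (Finset.mem_univ i)
    let σ0 : Fin l → Fin l := fun i => (s.orderIsoOfFin hcard).symm ⟨f i, hmem i⟩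
    have hσ0 : Function.Injective σ0 := by
      intro a b hab
      apply hf
      have := congrArg (s.orderIsoOfFin hcard) hab
      simp only [σ0, OrderIso.apply_symm_apply] at this
      exact congrArg Subtype.val this
    refine ⟨⟨S, Equiv.ofBijective σ0 (Finite.injective_iff_bijective.mp hσ0)⟩, ?_⟩
    apply Subtype.ext
    funext i
    show sEmb S (σ0 i) = f i
    have : sEmb S (σ0 i) = ((s.orderIsoOfFin hcard) (σ0 i) : Fin m) := rfl
    rw [this]
    show (((s.orderIsoOfFin hcard) ((s.orderIsoOfFin hcard).symm ⟨f i, hmem i⟩)) : Fin m) = f i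
    rw [OrderIso.apply_symm_apply]

-- step 1
lemma step1 (A : Matrix (Fin l) (Fin m) R) (B : Matrix (Fin m) (Fin l) R) :
    det (A * B) = ∑ f : Fin l → Fin m, (∏ i, A i (f i)) * det (B.submatrix f id) := by
  have h1 : det (A * B) = (Matrix.detRowAlternating : _ [⋀^Fin l]→ₗ[R] R).toMultilinearMap
      (fun i => ∑ k : Fin m, A i k • B k) := by
    congr 1
    funext i j
    simp [Matrix.mul_apply]
  rw [h1, MultilinearMap.map_sum]
  congr 1
  funext f
  rw [MultilinearMap.map_smul_univ]
  rfl
lemma cauchyBinet (A : Matrix (Fin l) (Fin m) R) (B : Matrix (Fin m) (Fin l) R) :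
    det (A * B) = ∑ s : {s : Finset (Fin m) // s.card = l},
      det (A.submatrix id (sEmb s)) * det (B.submatrix (sEmb s) id) := by
  classical
  rw [step1]
  have h2 : ∑ f : Fin l → Fin m, (∏ i, A i (f i)) * det (B.submatrix f id)
      = ∑ f : {f : Fin l → Fin m // Function.Injective f},
          (∏ i, A i (f.1 i)) * det (B.submatrix f.1 id) := by
    rw [← Finset.sum_filter_add_sum_filter_not Finset.univ (fun f => Function.Injective f)]
    have hni : ∑ f ∈ Finset.univ.filter (fun f : Fin l → Fin m => ¬ Function.Injective f),
        (∏ i, A i (f i)) * det (B.submatrix f id) = 0 := by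
      apply Finset.sum_eq_zero
      intro f hf
      have hf2 := (Finset.mem_filter.mp hf).2
      simp only [Function.Injective] at hf2
      push_neg at hf2
      obtain ⟨a, b, hab, hne⟩ := hf2
      have : det (B.submatrix f id) = 0 := by
        apply Matrix.det_zero_of_row_eq hne
        funext j
        simp [Matrix.submatrix_apply, hab]
      rw [this, mul_zero]
    rw [hni, add_zero]
    exact Finset.sum_subtype _ (fun f => by simp) _
  rw [h2]
  rw [← Fintype.sum_equiv pairEquiv
    (fun p => (∏ i, A i ((sEmb p.1 ∘ p.2) i)) * det (B.submatrix (sEmb p.1 ∘ p.2) id))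
    (fun f => (∏ i, A i (f.1 i)) * det (B.submatrix f.1 id)) (fun p => rfl)]
  rw [Fintype.sum_prod_type]
  congr 1
  funext s
  have key : ∀ σ : Equiv.Perm (Fin l),
      det (B.submatrix (sEmb s ∘ σ) id)
        = (Equiv.Perm.sign σ : R) * det (B.submatrix (sEmb s) id) := by
    intro σ
    have : B.submatrix (sEmb s ∘ σ) id = (B.submatrix (sEmb s) id).submatrix σ id := rfl
    rw [this, Matrix.det_permute]
  calc ∑ σ : Equiv.Perm (Fin l),
        (∏ i, A i ((sEmb s ∘ σ) i)) * det (B.submatrix (sEmb s ∘ σ) id)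
      = (∑ σ : Equiv.Perm (Fin l), (Equiv.Perm.sign σ : R)
          * ∏ i, (A.submatrix id (sEmb s))ᵀ (σ i) i) * det (B.submatrix (sEmb s) id) := by
        rw [Finset.sum_mul]
        congr 1
        funext σ
        rw [key σ]
        have hA : (∏ i, A i ((sEmb s ∘ σ) i)) = ∏ i, (A.submatrix id (sEmb s))ᵀ (σ i) i := rfl
        rw [hA]; ring
      _ = det (A.submatrix id (sEmb s)) * det (B.submatrix (sEmb s) id) := by
        rw [← Matrix.det_apply', Matrix.det_transpose]

/-- The `l`-th compound matrix. -/
noncomputable def cmpd (A : Matrix (Fin m) (Fin m) R) :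
    Matrix {s : Finset (Fin m) // s.card = l} {s : Finset (Fin m) // s.card = l} R :=
  Matrix.of fun ν υ => det (A.submatrix (sEmb ν) (sEmb υ))

lemma cmpd_mul (A B : Matrix (Fin m) (Fin m) R) :
    cmpd (l := l) (A * B) = cmpd A * cmpd B := by
  ext ν υ
  show det ((A * B).submatrix (sEmb ν) (sEmb υ)) = _
  have h1 : (A * B).submatrix (sEmb ν) (sEmb υ)
      = (A.submatrix (sEmb ν) id) * (B.submatrix id (sEmb υ)) := by
    ext a b
    simp [Matrix.mul_apply]
  rw [h1, cauchyBinet]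
  rfl

lemma exists_sEmb_eq {s : {s : Finset (Fin m) // s.card = l}} {p : Fin m} (hp : p ∈ s.1) :
    ∃ a, sEmb s a = p := by
  have := sEmb_range s
  have : p ∈ Set.range (sEmb s) := by rw [this]; exact_mod_cast hp
  exact this

lemma exists_mem_sdiff {ν υ : {s : Finset (Fin m) // s.card = l}} (h : ν ≠ υ) :
    ∃ p, p ∈ ν.1 ∧ p ∉ υ.1 := by
  by_contra hc
  push_neg at hc
  exact h (Subtype.ext (Finset.eq_of_subset_of_card_le hc (by rw [ν.2, υ.2])))

lemma cmpd_transvection_diag (i j : Fin m) (hij : i ≠ j) (c : R)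
    (ν : {s : Finset (Fin m) // s.card = l}) :
    det ((Matrix.transvection i j c).submatrix (sEmb ν) (sEmb ν)) = 1 := by
  by_cases hi : i ∈ ν.1
  · by_cases hj : j ∈ ν.1
    · obtain ⟨a0, ha0⟩ := exists_sEmb_eq hi
      obtain ⟨b0, hb0⟩ := exists_sEmb_eq hj
      have hab : a0 ≠ b0 := fun h => hij (by rw [← ha0, ← hb0, h])
      have : (Matrix.transvection i j c).submatrix (sEmb ν) (sEmb ν)
          = Matrix.transvection a0 b0 c := by
        ext a b
        simp only [Matrix.submatrix_apply, Matrix.transvection, Matrix.add_apply,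
          Matrix.one_apply, Matrix.single]
        have h1 : (sEmb ν a = sEmb ν b) ↔ (a = b) := (sEmb_injective ν).eq_iff
        have h2 : (i = sEmb ν a) ↔ (a0 = a) := by
          rw [← ha0]; exact (sEmb_injective ν).eq_iff
        have h3 : (j = sEmb ν b) ↔ (b0 = b) := by
          rw [← hb0]; exact (sEmb_injective ν).eq_iff
        simp only [Matrix.of_apply]
        rw [if_congr h1 rfl rfl, if_congr (and_congr h2 h3) rfl rfl]
      rw [this, Matrix.det_transvection_of_ne _ _ hab]
    · have : (Matrix.transvection i j c).submatrix (sEmb ν) (sEmb ν) = 1 := by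
        ext a b
        simp only [Matrix.submatrix_apply, Matrix.transvection, Matrix.add_apply,
          Matrix.one_apply, Matrix.single, Matrix.of_apply]
        have h3 : ¬ (i = sEmb ν a ∧ j = sEmb ν b) := by
          rintro ⟨-, h⟩; exact hj (h ▸ sEmb_mem ν b)
        rw [if_neg h3, if_congr (sEmb_injective ν).eq_iff rfl rfl, add_zero]
      rw [this, Matrix.det_one]
  · have : (Matrix.transvection i j c).submatrix (sEmb ν) (sEmb ν) = 1 := by
      ext a b
      simp only [Matrix.submatrix_apply, Matrix.transvection, Matrix.add_apply,
        Matrix.one_apply, Matrix.single, Matrix.of_apply]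
      have h3 : ¬ (i = sEmb ν a ∧ j = sEmb ν b) := by
        rintro ⟨h, -⟩; exact hi (h ▸ sEmb_mem ν a)
      rw [if_neg h3, if_congr (sEmb_injective ν).eq_iff rfl rfl, add_zero]
    rw [this, Matrix.det_one]

lemma cmpd_transvection_off (i j : Fin m) (c : R)
    {ν υ : {s : Finset (Fin m) // s.card = l}} (hne : ν ≠ υ)
    (h : ¬ (i ∈ ν.1 ∧ i ∉ υ.1)) :
    det ((Matrix.transvection i j c).submatrix (sEmb ν) (sEmb υ)) = 0 := by
  obtain ⟨p, hpν, hpυ⟩ := exists_mem_sdiff hne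
  have hpi : p ≠ i := by
    rintro rfl
    exact h ⟨hpν, hpυ⟩
  obtain ⟨a0, ha0⟩ := exists_sEmb_eq hpν
  apply Matrix.det_eq_zero_of_row_eq_zero a0
  intro b
  simp only [Matrix.submatrix_apply, Matrix.transvection, Matrix.add_apply,
    Matrix.one_apply, Matrix.single, Matrix.of_apply, ha0]
  rw [if_neg (fun hc : i = p ∧ j = sEmb υ b => hpi hc.1.symm), add_zero,
    if_neg (fun hc : p = sEmb υ b => hpυ (hc ▸ sEmb_mem υ b))]

lemma det_cmpd_transvection (i j : Fin m) (hij : i ≠ j) (c : R) :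
    det (cmpd (l := l) (Matrix.transvection i j c)) = 1 := by
  classical
  have hzero : ∀ ν : {s : Finset (Fin m) // s.card = l}, ¬ i ∈ ν.1 →
      ∀ υ : {s : Finset (Fin m) // s.card = l}, i ∈ υ.1 →
      cmpd (l := l) (Matrix.transvection i j c) ν υ = 0 := fun ν hν υ hυ =>
    cmpd_transvection_off i j c (by rintro rfl; exact hν hυ) (fun hc => hν hc.1)
  rw [Matrix.twoBlockTriangular_det (cmpd (l := l) (Matrix.transvection i j c))
    (fun ν : {s : Finset (Fin m) // s.card = l} => i ∈ ν.1) hzero]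
  have hb1 : (Matrix.toSquareBlockProp (cmpd (l := l) (Matrix.transvection i j c))
      (fun ν => i ∈ ν.1)) = 1 := by
    ext ⟨ν, hν⟩ ⟨υ, hυ⟩
    show cmpd (Matrix.transvection i j c) ν υ = _
    by_cases heq : ν = υ
    · subst heq
      rw [Matrix.one_apply_eq]
      exact cmpd_transvection_diag i j hij c ν
    · rw [Matrix.one_apply_ne (fun hc => heq (by injection hc))]
      exact cmpd_transvection_off i j c heq (fun hc => hc.2 hυ)
  have hb2 : (Matrix.toSquareBlockProp (cmpd (l := l) (Matrix.transvection i j c))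
      (fun ν => ¬ i ∈ ν.1)) = 1 := by
    ext ⟨ν, hν⟩ ⟨υ, hυ⟩
    show cmpd (Matrix.transvection i j c) ν υ = _
    by_cases heq : ν = υ
    · subst heq
      rw [Matrix.one_apply_eq]
      exact cmpd_transvection_diag i j hij c ν
    · rw [Matrix.one_apply_ne (fun hc => heq (by injection hc))]
      exact cmpd_transvection_off i j c heq (fun hc => hν hc.1)
  rw [hb1, hb2, Matrix.det_one, Matrix.det_one, mul_one]

lemma card_filter_mem (hl : 1 ≤ l) (hlm : l ≤ m) (i : Fin m) :
    (Finset.univ.filter (fun ν : {s : Finset (Fin m) // s.card = l} => i ∈ ν.1)).card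
      = Nat.choose (m - 1) (l - 1) := by
  classical
  have : (Finset.powersetCard (l - 1) (Finset.univ.erase i)).card
      = Nat.choose (m - 1) (l - 1) := by
    rw [Finset.card_powersetCard, Finset.card_erase_of_mem (Finset.mem_univ i),
      Finset.card_univ, Fintype.card_fin]
  rw [← this]
  apply Finset.card_bij (fun ν _ => ν.1.erase i)
  · rintro ν hν
    simp only [Finset.mem_filter] at hν
    rw [Finset.mem_powersetCard]
    exact ⟨Finset.erase_subset_erase i (Finset.subset_univ _),
      by rw [Finset.card_erase_of_mem hν.2, ν.2]⟩
  · rintro ν hν τ hτ hmem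
    simp only [Finset.mem_filter] at hν hτ
    apply Subtype.ext
    rw [← Finset.insert_erase hν.2, ← Finset.insert_erase hτ.2, hmem]
  · rintro t ht
    rw [Finset.mem_powersetCard] at ht
    have hit : i ∉ t := fun hc => (Finset.mem_erase.mp (ht.1 hc)).1 rfl
    refine ⟨⟨insert i t, ?_⟩, ?_, ?_⟩
    · rw [Finset.card_insert_of_notMem hit, ht.2]
      omega
    · simp [Finset.mem_filter]
    · simp [Finset.erase_insert hit]

lemma prod_sEmb (D : Fin m → R) (ν : {s : Finset (Fin m) // s.card = l}) :
    (∏ a : Fin l, D (sEmb ν a)) = ∏ p ∈ ν.1, D p := by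
  classical
  apply Finset.prod_nbij (sEmb ν)
  · intro a _; exact sEmb_mem ν a
  · intro a _ b _ h; exact sEmb_injective ν h
  · intro p hp
    obtain ⟨a, ha⟩ := exists_sEmb_eq hp
    exact ⟨a, Finset.mem_coe.mpr (Finset.mem_univ a), ha⟩
  · intro a _; rfl

lemma cmpd_diagonal (D : Fin m → R) :
    cmpd (l := l) (Matrix.diagonal D)
      = Matrix.diagonal (fun ν : {s : Finset (Fin m) // s.card = l} => ∏ p ∈ ν.1, D p) := by
  classical
  ext ν υ
  by_cases heq : ν = υ
  · subst heq
    show det ((Matrix.diagonal D).submatrix (sEmb ν) (sEmb ν)) = _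
    have : (Matrix.diagonal D).submatrix (sEmb ν) (sEmb ν)
        = Matrix.diagonal (fun a => D (sEmb ν a)) := by
      ext a b
      by_cases hab : a = b
      · subst hab; simp
      · rw [Matrix.submatrix_apply,
          Matrix.diagonal_apply_ne _ (fun hc => hab (sEmb_injective ν hc)),
          Matrix.diagonal_apply_ne _ hab]
    rw [this, Matrix.det_diagonal, Matrix.diagonal_apply_eq, prod_sEmb]
  · obtain ⟨p, hpν, hpυ⟩ := exists_mem_sdiff heq
    obtain ⟨a0, ha0⟩ := exists_sEmb_eq hpν
    rw [Matrix.diagonal_apply_ne _ heq]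
    show det ((Matrix.diagonal D).submatrix (sEmb ν) (sEmb υ)) = 0
    apply Matrix.det_eq_zero_of_row_eq_zero a0
    intro b
    rw [Matrix.submatrix_apply, ha0,
      Matrix.diagonal_apply_ne _ (fun hc : p = sEmb υ b => hpυ (hc ▸ sEmb_mem υ b))]

lemma det_cmpd_diagonal (hl : 1 ≤ l) (hlm : l ≤ m) (D : Fin m → R) :
    det (cmpd (l := l) (Matrix.diagonal D))
      = det (Matrix.diagonal D) ^ Nat.choose (m - 1) (l - 1) := by
  classical
  rw [cmpd_diagonal, Matrix.det_diagonal, Matrix.det_diagonal]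
  have h1 : ∀ ν : {s : Finset (Fin m) // s.card = l},
      (∏ p ∈ ν.1, D p) = ∏ p : Fin m, (if p ∈ ν.1 then D p else 1) := by
    intro ν
    rw [← Finset.prod_filter, Finset.filter_univ_mem]
  simp only [h1]
  rw [Finset.prod_comm]
  have h2 : ∀ p : Fin m,
      (∏ ν : {s : Finset (Fin m) // s.card = l}, (if p ∈ ν.1 then D p else 1))
        = D p ^ Nat.choose (m - 1) (l - 1) := by
    intro p
    rw [← Finset.prod_filter_mul_prod_filter_not Finset.univ
      (fun ν : {s : Finset (Fin m) // s.card = l} => p ∈ ν.1)]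
    rw [Finset.prod_congr rfl (fun ν hν => if_pos (Finset.mem_filter.mp hν).2),
      Finset.prod_congr rfl (fun ν hν => if_neg (Finset.mem_filter.mp hν).2),
      Finset.prod_const, Finset.prod_const, one_pow, mul_one, card_filter_mem hl hlm]
  rw [Finset.prod_congr rfl (fun p _ => h2 p), ← Finset.prod_pow]

lemma detSF (hl : 1 ≤ l) (hlm : l ≤ m) (A : Matrix (Fin m) (Fin m) ℂ) :
    det (cmpd (l := l) A) = det A ^ Nat.choose (m - 1) (l - 1) := by
  apply Matrix.diagonal_transvection_induction
    (fun M => det (cmpd (l := l) M) = det M ^ Nat.choose (m - 1) (l - 1)) A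
  · intro D _
    exact det_cmpd_diagonal hl hlm D
  · intro t
    rw [t.det, one_pow]
    obtain ⟨i, j, hij, c⟩ := t
    rw [Matrix.TransvectionStruct.toMatrix_mk]
    exact det_cmpd_transvection i j hij c
  · intro M N hM hN
    rw [cmpd_mul, Matrix.det_mul, hM, hN, Matrix.det_mul, mul_pow]

end CasAux
open CasAux


def Xmat {m : ℕ} (x : Fin m → ℕ → ℂ) (n : ℕ) : Matrix (Fin m) (Fin m) ℂ :=
  Matrix.of fun i c => x c (n + (i : ℕ))

section rec
variable {m : ℕ} (α : ℕ → Fin (m + 1) → ℂ)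
  (hα : ∀ n, α n 0 * α n (Fin.last m) ≠ 0)
  (Ψ : ℕ → Matrix (Fin m) (Fin m) ℂ)
  (hΨ : ∀ n (i j : Fin m), Ψ n i j =
    if (i : ℕ) + 1 = m then - α n (Fin.castSucc j) / α n (Fin.last m)
    else if (j : ℕ) = (i : ℕ) + 1 then 1 else 0)
  (x : Fin m → ℕ → ℂ)
  (hx : ∀ (i : Fin m) (n : ℕ), ∑ j : Fin (m + 1), α n j * x i (n + (j : ℕ)) = 0)

include hα hΨ hx in
lemma Xmat_succ (N : ℕ) : Xmat x (N + 1) = Ψ N * Xmat x N := by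
  ext i c
  rw [Matrix.mul_apply]
  show x c (N + 1 + (i : ℕ)) = ∑ k : Fin m, Ψ N i k * x c (N + (k : ℕ))
  by_cases h : (i : ℕ) + 1 = m
  · have hA : α N (Fin.last m) ≠ 0 := fun hc => hα N (by rw [hc, mul_zero])
    have hs : ∑ k : Fin m, α N (Fin.castSucc k) * x c (N + (k : ℕ))
        = - (α N (Fin.last m) * x c (N + m)) := by
      have := hx c N
      rw [Fin.sum_univ_castSucc] at this
      simp only [Fin.coe_castSucc, Fin.val_last] at this
      linear_combination this
    calc x c (N + 1 + (i : ℕ)) = x c (N + m) := by rw [show N + 1 + (i:ℕ) = N + m by omega]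
      _ = (∑ k : Fin m, α N (Fin.castSucc k) * x c (N + (k : ℕ)))
            * (-(α N (Fin.last m))⁻¹) := by
          rw [hs]; field_simp
      _ = ∑ k : Fin m, Ψ N i k * x c (N + (k : ℕ)) := by
          rw [Finset.sum_mul]
          apply Finset.sum_congr rfl
          intro k _
          rw [hΨ N i k, if_pos h]
          field_simp
  · have hlt : (i : ℕ) + 1 < m := lt_of_le_of_ne i.isLt h
    set i' : Fin m := ⟨(i : ℕ) + 1, hlt⟩ with hi'
    have : ∀ k : Fin m, Ψ N i k * x c (N + (k : ℕ))
        = if k = i' then x c (N + (k : ℕ)) else 0 := by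
      intro k
      rw [hΨ N i k, if_neg h]
      by_cases hk : k = i'
      · rw [if_pos (by rw [hk]), if_pos hk, one_mul]
      · rw [if_neg (fun hc => hk (Fin.ext hc)), if_neg hk, zero_mul]
    rw [Finset.sum_congr rfl (fun k _ => this k), Finset.sum_ite_eq' Finset.univ i']
    rw [if_pos (Finset.mem_univ i')]
    congr 1
    show N + 1 + (i : ℕ) = N + ((i : ℕ) + 1)
    omega

include hα hΨ hx in
lemma Xmat_add (n j : ℕ) : Xmat x (n + j) = prodPsi Ψ n j * Xmat x n := by
  induction j with
  | zero => rw [prodPsi, Matrix.one_mul, Nat.add_zero]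
  | succ j ih =>
      rw [show n + (j + 1) = (n + j) + 1 by omega, Xmat_succ α hα Ψ hΨ x hx,
        ih, prodPsi, Matrix.mul_assoc]

end rec

/-- **The Casoratian of the minors** (Section 3.3 of the paper).  With `x 0, …, x (m-1)`
solutions of the recurrence with companion matrices `Ψ n`, and a fixed strictly
increasing row multi-index `μs`, one has, for every `n`,
`det [ det x_{n+j-1}^{(μ,υ)} ]_{j,υ}
  = det [ det (Ψ_{n+j-2} ⋯ Ψ_n)^{(μ,ν)} ]_{j,ν} * (det x_n)^{C(m-1,l-1)}`,
where `x_n` is the full `m × m` Casoratian matrix and the multi-indices `υ`, `ν` are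
enumerated by a fixed ordering `e`. -/
theorem stmt_7 (m l : ℕ) (hm : 1 ≤ m) (hl : 1 ≤ l) (hlm : l ≤ m)
    (α : ℕ → Fin (m + 1) → ℂ)
    (hα : ∀ n, α n 0 * α n (Fin.last m) ≠ 0)
    (Ψ : ℕ → Matrix (Fin m) (Fin m) ℂ)
    (hΨ : ∀ n (i j : Fin m), Ψ n i j =
      if (i : ℕ) + 1 = m then - α n (Fin.castSucc j) / α n (Fin.last m)
      else if (j : ℕ) = (i : ℕ) + 1 then 1 else 0)
    (x : Fin m → ℕ → ℂ)
    (hx : ∀ (i : Fin m) (n : ℕ), ∑ j : Fin (m + 1), α n j * x i (n + (j : ℕ)) = 0)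
    (μs : Fin l → Fin m) (hμ : StrictMono μs)
    (e : Fin (Nat.choose m l) ≃ {s : Finset (Fin m) // s.card = l}) :
    ∀ n : ℕ,
      (Matrix.of fun (j υ : Fin (Nat.choose m l)) =>
        (Matrix.of fun (a b : Fin l) =>
          x ((e υ).1.orderEmbOfFin (e υ).2 b) (n + (j : ℕ) + (μs a : ℕ))).det).det
      =
      (Matrix.of fun (j ν : Fin (Nat.choose m l)) =>
        (Matrix.of fun (a b : Fin l) =>
          prodPsi Ψ n (j : ℕ) (μs a) ((e ν).1.orderEmbOfFin (e ν).2 b)).det).det *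
      (Matrix.of fun (i j : Fin m) => x j (n + (i : ℕ))).det
        ^ (Nat.choose (m - 1) (l - 1)) := by
  intro n
  classical
  have hM : (Matrix.of fun (j υ : Fin (Nat.choose m l)) =>
        (Matrix.of fun (a b : Fin l) =>
          x ((e υ).1.orderEmbOfFin (e υ).2 b) (n + (j : ℕ) + (μs a : ℕ))).det)
      = (Matrix.of fun (j ν : Fin (Nat.choose m l)) =>
          (Matrix.of fun (a b : Fin l) =>
            prodPsi Ψ n (j : ℕ) (μs a) ((e ν).1.orderEmbOfFin (e ν).2 b)).det)
        * (cmpd (l := l) (Xmat x n)).submatrix e e := by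
    ext j υ
    show Matrix.det ((Xmat x (n + (j : ℕ))).submatrix μs (sEmb (e υ))) = _
    rw [Xmat_add α hα Ψ hΨ x hx n (j : ℕ)]
    have hsplit : (prodPsi Ψ n (j : ℕ) * Xmat x n).submatrix μs (sEmb (e υ))
        = ((prodPsi Ψ n (j : ℕ)).submatrix μs id) * ((Xmat x n).submatrix id (sEmb (e υ))) := by
      ext a b
      simp [Matrix.mul_apply]
    rw [hsplit, cauchyBinet, Matrix.mul_apply]
    exact (Fintype.sum_equiv e _ _ (fun ν => rfl)).symm
  rw [hM, Matrix.det_mul, Matrix.det_submatrix_equiv_self, detSF hl hlm]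
  rfl
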